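/- arXiv:2211.12179 — 3 statements merged into one kernel-verified Lean document; each statement's English description precedes it below -/
import Mathlib

section
/- A c-matching M in an edge-weighted, vertex-capacitated graph G is maximum-weight if and only if G contains no proper M-augmenting trail. -/
variable {V : Type*}

/-- Degree of a vertex with respect to an edge set. -/
def degOn [DecidableEq V] (M : Finset (Sym2 V)) (v : V) : ℕ :=
  (M.filter (fun e => v ∈ e)).card

/-- Total weight of an edge set. -/
def wsum (w : Sym2 V → ℝ) (M : Finset (Sym2 V)) : ℝ := ∑ e ∈ M, w e

/-- A `c`-matching: a set of edges of `G` with every vertex degree at most its capacity. -/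
def IsCMatching [DecidableEq V] (G : SimpleGraph V) (c : V → ℕ) (M : Finset (Sym2 V)) : Prop :=
  (∀ e ∈ M, e ∈ G.edgeSet) ∧ ∀ v, degOn M v ≤ c v

/-- A maximum-weight `c`-matching. -/
def IsMaxCMatching [DecidableEq V] (G : SimpleGraph V) (w : Sym2 V → ℝ) (c : V → ℕ)
    (M : Finset (Sym2 V)) : Prop :=
  IsCMatching G c M ∧ ∀ N, IsCMatching G c N → wsum w N ≤ wsum w M

/-- A list of edges is `M`-alternating if consecutive edges alternate
between `M` and its complement. -/
def Alternating [DecidableEq V] (M : Finset (Sym2 V)) (l : List (Sym2 V)) : Prop :=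
  l.Chain' (fun e f => (e ∈ M ↔ f ∉ M))

/-- Weight (with multiplicity) of the matched edges of a list. -/
def matchedWeight [DecidableEq V] (w : Sym2 V → ℝ) (M : Finset (Sym2 V))
    (l : List (Sym2 V)) : ℝ :=
  ((l.filter (fun e => decide (e ∈ M))).map w).sum

/-- Weight (with multiplicity) of the unmatched edges of a list. -/
def unmatchedWeight [DecidableEq V] (w : Sym2 V → ℝ) (M : Finset (Sym2 V))
    (l : List (Sym2 V)) : ℝ :=
  ((l.filter (fun e => decide (e ∉ M))).map w).sum

/-- `M`-augmenting: `w(l \ M) > w(l ∩ M)` (multiplicities counted). -/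
def Augmenting [DecidableEq V] (w : Sym2 V → ℝ) (M : Finset (Sym2 V)) (l : List (Sym2 V)) : Prop :=
  matchedWeight w M l < unmatchedWeight w M l

/-- Fractional degree `Σ_{e ∈ δ(v)} x_e`. -/
def lpDeg [Fintype V] [DecidableEq V] (x : Sym2 V → ℝ) (v : V) : ℝ :=
  ∑ e : Sym2 V, if v ∈ e then x e else 0

/-- A fractional `c`-matching. -/
def IsFracCMatching [Fintype V] [DecidableEq V] (G : SimpleGraph V) (c : V → ℕ)
    (x : Sym2 V → ℝ) : Prop :=
  (∀ e, 0 ≤ x e ∧ x e ≤ 1) ∧ (∀ e, e ∉ G.edgeSet → x e = 0) ∧ ∀ v, lpDeg x v ≤ (c v : ℝ)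

/-- LP objective value `w^T x`. -/
def lpVal [Fintype V] (w x : Sym2 V → ℝ) : ℝ := ∑ e : Sym2 V, w e * x e

/-- `ν^c(G)`: maximum weight of a `c`-matching. -/
noncomputable def nuC [Fintype V] [DecidableEq V] (G : SimpleGraph V) (w : Sym2 V → ℝ)
    (c : V → ℕ) : ℝ :=
  sSup {r | ∃ M, IsCMatching G c M ∧ r = wsum w M}

/-- `ν_f^c(G)`: optimum of the fractional `c`-matching LP. -/
noncomputable def nuF [Fintype V] [DecidableEq V] (G : SimpleGraph V) (w : Sym2 V → ℝ)
    (c : V → ℕ) : ℝ :=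
  sSup {r | ∃ x, IsFracCMatching G c x ∧ r = lpVal w x}

/-- A capacitated graph is stable if `ν^c(G) = ν_f^c(G)`. -/
def Stable [Fintype V] [DecidableEq V] (G : SimpleGraph V) (w : Sym2 V → ℝ) (c : V → ℕ) : Prop :=
  nuC G w c = nuF G w c

/-- The ε-augmentation `x^{M/W}(ε)` of a walk. -/
def epsAug [DecidableEq V] {G : SimpleGraph V} {u v : V} (M : Finset (Sym2 V))
    (p : G.Walk u v) (ε : ℝ) : Sym2 V → ℝ :=
  fun e => if e ∈ M then 1 - (p.edges.count e : ℝ) * ε else (p.edges.count e : ℝ) * ε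

/-- Symmetric difference of edge sets. -/
def symmDiffE [DecidableEq V] (M T : Finset (Sym2 V)) : Finset (Sym2 V) := (M \ T) ∪ (T \ M)

/-!
If `p` is a proper augmenting trail, `M ∆ p` is a heavier `c`-matching: along an alternating
trail each interior visit of a vertex trades a matched edge for an unmatched one, so only the
ends of the trail change degree, and there properness applies.

Conversely, let `N` be a heavier `c`-matching and put `A = M \ N`, `B = N \ M`. Take a maximal
alternating trail in `A ∪ B`. If it is augmenting it is proper: at an end it either starts with
a matched edge, which only frees capacity, or, being maximal, it has used up all edges of `A`
there and adds only edges of `B`. Otherwise remove its edges from `A` and `B`: the weight of `B`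
still exceeds that of `A`, and swapping `A` for `B` in `M` still gives a `c`-matching, since a
vertex where the trail removes more matched than unmatched edges is an end at which the trail
has absorbed all edges of `B`. Induction on `|A ∪ B|` concludes.
-/

open Finset SimpleGraph

section Bookkeeping

variable [DecidableEq V]

lemma sum_symmDiffE_add_sum_inter {β : Type*} [AddCommMonoid β] (f : Sym2 V → β)
    (M T : Finset (Sym2 V)) :
    ∑ e ∈ symmDiffE M T, f e + ∑ e ∈ T ∩ M, f e = ∑ e ∈ M, f e + ∑ e ∈ T \ M, f e := by
  rw [symmDiffE, sum_union disjoint_sdiff_sdiff, add_right_comm, add_comm (∑ e ∈ M \ T, f e),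
    inter_comm, sum_inter_add_sum_sdiff]

lemma degOn_eq_sum (S : Finset (Sym2 V)) (x : V) :
    degOn S x = ∑ e ∈ S, if x ∈ e then 1 else 0 :=
  card_filter _ _

lemma degOn_inter_add_degOn_sdiff (S T : Finset (Sym2 V)) (x : V) :
    degOn (S ∩ T) x + degOn (S \ T) x = degOn S x := by
  simp only [degOn_eq_sum, sum_inter_add_sum_sdiff]

lemma degOn_symmDiffE_add_degOn_inter (M T : Finset (Sym2 V)) (x : V) :
    degOn (symmDiffE M T) x + degOn (T ∩ M) x = degOn M x + degOn (T \ M) x := by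
  simp only [degOn_eq_sum, sum_symmDiffE_add_sum_inter]

lemma degOn_mono {S T : Finset (Sym2 V)} (h : S ⊆ T) (x : V) : degOn S x ≤ degOn T x :=
  card_le_card (filter_subset_filter _ h)

lemma degOn_inter_of_forall_mem {S T : Finset (Sym2 V)} {x : V}
    (h : ∀ e ∈ S, x ∈ e → e ∈ T) : degOn (S ∩ T) x = degOn S x := by
  unfold degOn
  congr 1
  ext e
  simp only [mem_filter, mem_inter]
  exact ⟨fun ⟨⟨hS, _⟩, hx⟩ => ⟨hS, hx⟩, fun ⟨hS, hx⟩ => ⟨⟨hS, h e hS hx⟩, hx⟩⟩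

lemma wsum_inter_add_wsum_sdiff (w : Sym2 V → ℝ) (S T : Finset (Sym2 V)) :
    wsum w (S ∩ T) + wsum w (S \ T) = wsum w S :=
  sum_inter_add_sum_sdiff _ _ _

lemma wsum_symmDiffE_add_wsum_inter (w : Sym2 V → ℝ) (M T : Finset (Sym2 V)) :
    wsum w (symmDiffE M T) + wsum w (T ∩ M) = wsum w M + wsum w (T \ M) :=
  sum_symmDiffE_add_sum_inter w M T

lemma degOn_toFinset_filter {l : List (Sym2 V)} (hl : l.Nodup) (P : Sym2 V → Prop)
    [DecidablePred P] (x : V) :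
    degOn (l.toFinset.filter P) x = l.countP (fun e => x ∈ e ∧ P e) := by
  rw [degOn, List.countP_eq_length_filter, ← List.toFinset_card_of_nodup (hl.filter _),
    List.toFinset_filter, filter_filter]
  simp only [decide_eq_true_eq, and_comm]

lemma degOn_toFinset_inter {l : List (Sym2 V)} (hl : l.Nodup) (M : Finset (Sym2 V)) (x : V) :
    degOn (l.toFinset ∩ M) x = l.countP (fun e => x ∈ e ∧ e ∈ M) := by
  rw [← degOn_toFinset_filter hl, filter_mem_eq_inter]

lemma degOn_toFinset_sdiff {l : List (Sym2 V)} (hl : l.Nodup) (M : Finset (Sym2 V)) (x : V) :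
    degOn (l.toFinset \ M) x = l.countP (fun e => x ∈ e ∧ e ∉ M) := by
  rw [← degOn_toFinset_filter hl, filter_notMem_eq_sdiff]

lemma matchedWeight_eq_wsum (w : Sym2 V → ℝ) (M : Finset (Sym2 V)) {l : List (Sym2 V)}
    (hl : l.Nodup) : matchedWeight w M l = wsum w (l.toFinset ∩ M) := by
  rw [matchedWeight, wsum, ← List.sum_toFinset w (hl.filter _), List.toFinset_filter]
  simp only [decide_eq_true_eq, filter_mem_eq_inter]

lemma unmatchedWeight_eq_wsum (w : Sym2 V → ℝ) (M : Finset (Sym2 V)) {l : List (Sym2 V)}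
    (hl : l.Nodup) : unmatchedWeight w M l = wsum w (l.toFinset \ M) := by
  rw [unmatchedWeight, wsum, ← List.sum_toFinset w (hl.filter _), List.toFinset_filter]
  simp only [decide_eq_true_eq, filter_notMem_eq_sdiff]

end Bookkeeping

section Alternating

variable [DecidableEq V] {G : SimpleGraph V}

def endSign (M : Finset (Sym2 V)) : Option (Sym2 V) → ℤ
  | none => 0
  | some e => if e ∈ M then -1 else 1

lemma endSign_le_one (M : Finset (Sym2 V)) (oe : Option (Sym2 V)) : endSign M oe ≤ 1 := by
  rcases oe with _ | e
  · simp [endSign]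
  · simp only [endSign]; split_ifs <;> omega

lemma endSign_lt_zero_iff {M : Finset (Sym2 V)} {oe : Option (Sym2 V)} :
    endSign M oe < 0 ↔ ∃ e ∈ oe, e ∈ M := by
  rcases oe with _ | e
  · simp [endSign]
  · simp only [endSign]; split_ifs <;> simp_all

lemma Alternating.reverse {M : Finset (Sym2 V)} {l : List (Sym2 V)} (h : Alternating M l) :
    Alternating M l.reverse :=
  List.isChain_reverse.2 (h.imp fun _ _ hef => by tauto)

/-- Along an alternating walk every interior visit of `x` uses one matched and one unmatched
edge, so only the end edges contribute to the difference of the two counts. -/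
theorem countP_unmatched_sub_countP_matched (M : Finset (Sym2 V)) {u v : V} (p : G.Walk u v)
    (hp : Alternating M p.edges) (x : V) :
    (p.edges.countP (fun e => x ∈ e ∧ e ∉ M) : ℤ) - p.edges.countP (fun e => x ∈ e ∧ e ∈ M) =
      (if x = u then endSign M p.edges.head? else 0) +
        (if x = v then endSign M p.edges.getLast? else 0) := by
  induction p with
  | nil => simp [endSign]
  | @cons u w v huw q ih =>
    have hne : u ≠ w := huw.ne
    cases q with
    | nil =>
      by_cases hm : s(u, w) ∈ M <;> by_cases hxu : x = u <;> by_cases hxw : x = w <;>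
        simp_all [endSign, List.countP_cons]
    | @cons w y v hwy q =>
      simp only [Walk.edges_cons] at hp ih ⊢
      obtain ⟨halt, hp⟩ := List.isChain_cons_cons.1 hp
      have := ih hp
      rw [List.getLast?_cons_cons]
      simp only [List.countP_cons, List.head?_cons] at this ⊢
      by_cases hm : s(u, w) ∈ M <;> by_cases hxu : x = u <;> by_cases hxw : x = w <;>
        simp_all [endSign] <;> omega

def IsProperAugmentingTrail (w : Sym2 V → ℝ) (c : V → ℕ) (M : Finset (Sym2 V)) {u v : V}
    (p : G.Walk u v) : Prop :=
  p.IsTrail ∧ Alternating M p.edges ∧ Augmenting w M p.edges ∧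
    degOn (symmDiffE M p.edges.toFinset) u ≤ c u ∧ degOn (symmDiffE M p.edges.toFinset) v ≤ c v

end Alternating

section MaximalTrail

variable [DecidableEq V] {G : SimpleGraph V}

structure IsAltTrailIn (M S : Finset (Sym2 V)) {u v : V} (p : G.Walk u v) : Prop where
  isTrail : p.IsTrail
  alternating : Alternating M p.edges
  edges_subset : ∀ e ∈ p.edges, e ∈ S

def IsMaximalAltTrailIn (M S : Finset (Sym2 V)) {u v : V} (p : G.Walk u v) : Prop :=
  IsAltTrailIn M S p ∧ ∀ ⦃u' v' : V⦄ (q : G.Walk u' v'), IsAltTrailIn M S q →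
    (∀ e ∈ p.edges, e ∈ q.edges) → q.length ≤ p.length

variable {M S : Finset (Sym2 V)} {u v : V} {p : G.Walk u v}

lemma IsAltTrailIn.reverse (hp : IsAltTrailIn M S p) : IsAltTrailIn M S p.reverse where
  isTrail := hp.isTrail.reverse
  alternating := by rw [Walk.edges_reverse]; exact hp.alternating.reverse
  edges_subset e he := hp.edges_subset e (by simpa using he)

lemma IsAltTrailIn.toFinset_subset (hp : IsAltTrailIn M S p) : p.edges.toFinset ⊆ S :=
  fun e he => hp.edges_subset e (List.mem_toFinset.1 he)

lemma IsAltTrailIn.length_le (hp : IsAltTrailIn M S p) : p.length ≤ S.card := by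
  rw [← Walk.length_edges, ← List.toFinset_card_of_nodup hp.isTrail.edges_nodup]
  exact card_le_card hp.toFinset_subset

lemma IsMaximalAltTrailIn.reverse (hp : IsMaximalAltTrailIn M S p) :
    IsMaximalAltTrailIn M S p.reverse :=
  ⟨hp.1.reverse, fun _ _ q hq hsub => by
    rw [Walk.length_reverse]
    exact hp.2 q hq fun e he => hsub e (by simpa using he)⟩

lemma IsMaximalAltTrailIn.mem_edges_of_head (hp : IsMaximalAltTrailIn M S p)
    (hS : ∀ e ∈ S, e ∈ G.edgeSet) {f : Sym2 V} (hf : p.edges.head? = some f) {e : Sym2 V}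
    (he : e ∈ S) (hue : u ∈ e) (hef : e ∈ M ↔ f ∉ M) : e ∈ p.edges := by
  by_contra hep
  obtain ⟨x, rfl⟩ : ∃ x, e = s(x, u) := by
    obtain ⟨x, hx⟩ := Sym2.mem_iff_exists.1 hue
    exact ⟨x, hx.trans Sym2.eq_swap⟩
  have hadj : G.Adj x u := hS _ he
  have hq : IsAltTrailIn M S (Walk.cons hadj p) := by
    refine ⟨(Walk.isTrail_cons hadj p).2 ⟨hp.1.isTrail, hep⟩, ?_, fun e' he' => ?_⟩
    · rw [Alternating, Walk.edges_cons]
      refine List.isChain_cons.2 ⟨fun f' hf' => ?_, hp.1.alternating⟩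
      rw [hf, Option.mem_some_iff] at hf'
      rwa [← hf']
    rcases List.mem_cons.1 he' with rfl | he'
    exacts [he, hp.1.edges_subset e' he']
  have := hp.2 _ hq fun e' he' => List.mem_cons_of_mem _ he'
  simp at this

lemma exists_isMaximalAltTrailIn (M : Finset (Sym2 V)) (hS : ∀ e ∈ S, e ∈ G.edgeSet)
    {e₀ : Sym2 V} (he₀ : e₀ ∈ S) :
    ∃ (u v : V) (p : G.Walk u v), IsMaximalAltTrailIn M S p ∧ e₀ ∈ p.edges := by
  classical
  let P : ℕ → Prop := fun n =>
    ∃ (u v : V) (p : G.Walk u v), IsAltTrailIn M S p ∧ e₀ ∈ p.edges ∧ p.length = n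
  have hP₁ : P 1 := by
    induction e₀ using Sym2.ind with
    | _ a b =>
      have hab : G.Adj a b := hS _ he₀
      refine ⟨a, b, hab.toWalk, ⟨?_, ?_, ?_⟩, by simp [hab.edges_toWalk], hab.length_toWalk⟩
      · simp [Walk.isTrail_def, hab.edges_toWalk]
      · rw [Alternating, hab.edges_toWalk]; exact List.isChain_singleton _
      · simpa [hab.edges_toWalk] using he₀
  have hP₁' : 1 ≤ S.card := card_pos.2 ⟨e₀, he₀⟩
  obtain ⟨u, v, p, hp, he₀p, hlen⟩ := Nat.findGreatest_spec hP₁' hP₁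
  refine ⟨u, v, p, ⟨hp, fun _ _ q hq hsub => ?_⟩, he₀p⟩
  rw [hlen]
  exact Nat.le_findGreatest hq.length_le ⟨_, _, q, hq, hsub e₀ he₀p, rfl⟩

end MaximalTrail

section TrailDegrees

variable [DecidableEq V] {G : SimpleGraph V} {M S : Finset (Sym2 V)} {u v : V}
  {p : G.Walk u v}

lemma SimpleGraph.Walk.IsTrail.degOn_sdiff_sub_degOn_inter (ht : p.IsTrail)
    (hp : Alternating M p.edges) (x : V) :
    (degOn (p.edges.toFinset \ M) x : ℤ) - degOn (p.edges.toFinset ∩ M) x =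
      (if x = u then endSign M p.edges.head? else 0) +
        (if x = v then endSign M p.edges.getLast? else 0) := by
  rw [degOn_toFinset_sdiff ht.edges_nodup, degOn_toFinset_inter ht.edges_nodup]
  exact countP_unmatched_sub_countP_matched M p hp x

lemma SimpleGraph.Walk.IsTrail.degOn_symmDiffE_of_ne (ht : p.IsTrail)
    (hp : Alternating M p.edges) {x : V} (hxu : x ≠ u) (hxv : x ≠ v) : degOn (symmDiffE M p.edges.toFinset) x = degOn M x := by
  have hcount := ht.degOn_sdiff_sub_degOn_inter hp x
  have := degOn_symmDiffE_add_degOn_inter M p.edges.toFinset x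
  simp only [hxu, hxv, if_false] at hcount
  omega

/-- A trail has more matched than unmatched edges at `x` only if it ends at `x` with a matched
edge, and a maximal trail cannot be prolonged there by an unmatched edge. -/
lemma IsMaximalAltTrailIn.mem_edges_of_degOn_lt (hp : IsMaximalAltTrailIn M S p)
    (hS : ∀ e ∈ S, e ∈ G.edgeSet) {x : V}
    (hx : degOn (p.edges.toFinset \ M) x < degOn (p.edges.toFinset ∩ M) x)
    {e : Sym2 V} (he : e ∈ S) (hxe : x ∈ e) (heM : e ∉ M) : e ∈ p.edges := by
  have hcount := hp.1.isTrail.degOn_sdiff_sub_degOn_inter hp.1.alternating x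
  have hend : (x = u ∧ endSign M p.edges.head? < 0) ∨ (x = v ∧ endSign M p.edges.getLast? < 0) := by
    by_contra! hno
    have hu : 0 ≤ if x = u then endSign M p.edges.head? else 0 := by
      split_ifs with h
      exacts [hno.1 h, le_rfl]
    have hv : 0 ≤ if x = v then endSign M p.edges.getLast? else 0 := by
      split_ifs with h
      exacts [hno.2 h, le_rfl]
    omega
  rcases hend with ⟨rfl, hneg⟩ | ⟨rfl, hneg⟩
  · obtain ⟨f, hf, hfM⟩ := endSign_lt_zero_iff.1 hneg
    exact hp.mem_edges_of_head hS hf he hxe (iff_of_false heM (not_not.2 hfM))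
  · obtain ⟨f, hf, hfM⟩ := endSign_lt_zero_iff.1 hneg
    rw [← List.head?_reverse, ← Walk.edges_reverse] at hf
    simpa using hp.reverse.mem_edges_of_head hS hf he hxe (iff_of_false heM (not_not.2 hfM))

end TrailDegrees

section Swap

variable [DecidableEq V] {G : SimpleGraph V} {w : Sym2 V → ℝ} {c : V → ℕ}
  {M A B : Finset (Sym2 V)}

/-- Replacing the edges `A` of `M` by the edges `B` yields a `c`-matching. -/
structure IsCSwap (G : SimpleGraph V) (c : V → ℕ) (M A B : Finset (Sym2 V)) : Prop where
  subset : A ⊆ M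
  disjoint : Disjoint B M
  edgeSet : ∀ e ∈ B, e ∈ G.edgeSet
  degOn_le : ∀ x, degOn M x + degOn B x ≤ c x + degOn A x

lemma IsCSwap.union_edgeSet (hM : IsCMatching G c M) (hs : IsCSwap G c M A B) :
    ∀ e ∈ A ∪ B, e ∈ G.edgeSet := by
  intro e he
  rcases mem_union.1 he with he | he
  exacts [hM.1 e (hs.subset he), hs.edgeSet e he]

lemma IsCSwap.inter_eq (hs : IsCSwap G c M A B) {T : Finset (Sym2 V)} (hT : T ⊆ A ∪ B) :
    T ∩ M = T ∩ A := by
  ext e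
  have := @hT e
  have := @hs.subset e
  have : e ∈ B → e ∉ M := fun h => disjoint_left.1 hs.disjoint h
  simp only [mem_inter, mem_union] at *
  tauto

lemma IsCSwap.sdiff_eq (hs : IsCSwap G c M A B) {T : Finset (Sym2 V)} (hT : T ⊆ A ∪ B) :
    T \ M = T ∩ B := by
  ext e
  have := @hT e
  have := @hs.subset e
  have : e ∈ B → e ∉ M := fun h => disjoint_left.1 hs.disjoint h
  simp only [mem_inter, mem_union, mem_sdiff] at *
  tauto

variable {u v : V} {p : G.Walk u v}

/-- If the trail starts with a matched edge it frees capacity at `u`; otherwise, being maximal,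
it has absorbed all of `A` at `u`, and it adds only edges of `B` there. -/
lemma IsCSwap.degOn_symmDiffE_le (hM : IsCMatching G c M) (hs : IsCSwap G c M A B)
    (hp : IsMaximalAltTrailIn M (A ∪ B) p) :
    degOn (symmDiffE M p.edges.toFinset) u ≤ c u := by
  cases hf : p.edges.head? with
  | none =>
    rw [List.head?_eq_none_iff.1 hf]
    simpa [symmDiffE] using hM.2 u
  | some f =>
    have key := degOn_symmDiffE_add_degOn_inter M p.edges.toFinset u
    have := hM.2 u
    by_cases hfM : f ∈ M
    · have hcount := hp.1.isTrail.degOn_sdiff_sub_degOn_inter hp.1.alternating u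
      have hsign : endSign M (some f) = -1 := if_pos hfM
      have := endSign_le_one M p.edges.getLast?
      rw [hf, hsign, if_pos rfl] at hcount
      split_ifs at hcount <;> omega
    · have hA : degOn (p.edges.toFinset ∩ M) u = degOn A u := by
        rw [hs.inter_eq hp.1.toFinset_subset, inter_comm]
        exact degOn_inter_of_forall_mem fun e he hue => List.mem_toFinset.2 <|
          hp.mem_edges_of_head (hs.union_edgeSet hM) hf (mem_union_left _ he) hue
            (iff_of_true (hs.subset he) hfM)
      have hB : degOn (p.edges.toFinset \ M) u ≤ degOn B u := by
        rw [hs.sdiff_eq hp.1.toFinset_subset]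
        exact degOn_mono inter_subset_right u
      have := hs.degOn_le u
      omega

lemma IsCSwap.sdiff_toFinset (hM : IsCMatching G c M) (hs : IsCSwap G c M A B)
    (hp : IsMaximalAltTrailIn M (A ∪ B) p) :
    IsCSwap G c M (A \ p.edges.toFinset) (B \ p.edges.toFinset) where
  subset := sdiff_subset.trans hs.subset
  disjoint := hs.disjoint.mono_left sdiff_subset
  edgeSet e he := hs.edgeSet e (mem_sdiff.1 he).1
  degOn_le x := by
    set T := p.edges.toFinset
    have hA := degOn_inter_add_degOn_sdiff A T x
    have hB := degOn_inter_add_degOn_sdiff B T x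
    have hTA : degOn (A ∩ T) x = degOn (T ∩ M) x := by
      rw [hs.inter_eq hp.1.toFinset_subset, inter_comm]
    have hTB : degOn (B ∩ T) x = degOn (T \ M) x := by
      rw [hs.sdiff_eq hp.1.toFinset_subset, inter_comm]
    have := hs.degOn_le x
    by_cases hx : degOn (T ∩ M) x ≤ degOn (T \ M) x
    · omega
    · have hBT : degOn (B ∩ T) x = degOn B x :=
        degOn_inter_of_forall_mem fun e he hxe => List.mem_toFinset.2 <|
          hp.mem_edges_of_degOn_lt (hs.union_edgeSet hM) (not_le.1 hx) (mem_union_right _ he) hxe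
            (disjoint_left.1 hs.disjoint he)
      have := hM.2 x
      omega

theorem IsCSwap.exists_isProperAugmentingTrail (hM : IsCMatching G c M)
    (hs : IsCSwap G c M A B) (hw : wsum w A < wsum w B) :
    ∃ (u v : V) (p : G.Walk u v), IsProperAugmentingTrail w c M p := by
  induction hn : (A ∪ B).card using Nat.strong_induction_on generalizing A B with
  | _ n ih =>
  obtain ⟨e₀, he₀⟩ : (A ∪ B).Nonempty := by
    rw [nonempty_iff_ne_empty]
    rintro hAB
    rw [union_eq_empty] at hAB
    simp [hAB.1, hAB.2, wsum] at hw
  obtain ⟨u, v, p, hp, he₀p⟩ := exists_isMaximalAltTrailIn M (hs.union_edgeSet hM) he₀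
  by_cases haug : Augmenting w M p.edges
  · refine ⟨u, v, p, hp.1.isTrail, hp.1.alternating, haug, hs.degOn_symmDiffE_le hM hp, ?_⟩
    simpa using hs.degOn_symmDiffE_le hM hp.reverse
  · set T := p.edges.toFinset
    have hlt : ((A \ T) ∪ (B \ T)).card < n := by
      rw [← hn, ← union_sdiff_distrib]
      exact card_lt_card (sdiff_ssubset hp.1.toFinset_subset ⟨e₀, List.mem_toFinset.2 he₀p⟩)
    refine ih _ hlt (hs.sdiff_toFinset hM hp) ?_ rfl
    have hl := hp.1.isTrail.edges_nodup
    have hmw := matchedWeight_eq_wsum w M hl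
    have humw := unmatchedWeight_eq_wsum w M hl
    rw [hs.inter_eq hp.1.toFinset_subset, inter_comm] at hmw
    rw [hs.sdiff_eq hp.1.toFinset_subset, inter_comm] at humw
    have := wsum_inter_add_wsum_sdiff w A T
    have := wsum_inter_add_wsum_sdiff w B T
    rw [Augmenting] at haug
    linarith

end Swap

section Main

variable [DecidableEq V] {G : SimpleGraph V} {w : Sym2 V → ℝ} {c : V → ℕ}
  {M N : Finset (Sym2 V)}

lemma IsProperAugmentingTrail.isCMatching_symmDiffE {u v : V} {p : G.Walk u v}
    (hM : IsCMatching G c M) (hp : IsProperAugmentingTrail w c M p) :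
    IsCMatching G c (symmDiffE M p.edges.toFinset) := by
  obtain ⟨ht, halt, -, hu, hv⟩ := hp
  refine ⟨fun e he => ?_, fun x => ?_⟩
  · rcases mem_union.1 he with he | he
    · exact hM.1 e (mem_sdiff.1 he).1
    · exact p.edges_subset_edgeSet (List.mem_toFinset.1 (mem_sdiff.1 he).1)
  · by_cases hxu : x = u
    · exact hxu ▸ hu
    by_cases hxv : x = v
    · exact hxv ▸ hv
    rw [ht.degOn_symmDiffE_of_ne halt hxu hxv]
    exact hM.2 x

lemma IsProperAugmentingTrail.wsum_lt {u v : V} {p : G.Walk u v}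
    (hp : IsProperAugmentingTrail w c M p) :
    wsum w M < wsum w (symmDiffE M p.edges.toFinset) := by
  have hl := hp.1.edges_nodup
  have haug : matchedWeight w M p.edges < unmatchedWeight w M p.edges := hp.2.2.1
  rw [matchedWeight_eq_wsum w M hl, unmatchedWeight_eq_wsum w M hl] at haug
  linarith [wsum_symmDiffE_add_wsum_inter w M p.edges.toFinset]

lemma IsCMatching.isCSwap_sdiff (hN : IsCMatching G c N) :
    IsCSwap G c M (M \ N) (N \ M) where
  subset := sdiff_subset
  disjoint := sdiff_disjoint
  edgeSet e he := hN.1 e (mem_sdiff.1 he).1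
  degOn_le x := by
    have := degOn_inter_add_degOn_sdiff M N x
    have hN' := degOn_inter_add_degOn_sdiff N M x
    rw [inter_comm] at hN'
    have := hN.2 x
    omega

lemma wsum_sdiff_lt_wsum_sdiff (h : wsum w M < wsum w N) :
    wsum w (M \ N) < wsum w (N \ M) := by
  have := wsum_inter_add_wsum_sdiff w M N
  have hN := wsum_inter_add_wsum_sdiff w N M
  rw [inter_comm] at hN
  linarith

end Main

theorem stmt1_general [DecidableEq V] (G : SimpleGraph V) (w : Sym2 V → ℝ)
    (c : V → ℕ) (M : Finset (Sym2 V)) (hM : IsCMatching G c M) :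
    IsMaxCMatching G w c M ↔
      ¬ ∃ (u v : V) (p : G.Walk u v), p.IsTrail ∧
          Alternating M p.edges ∧ Augmenting w M p.edges ∧
          degOn (symmDiffE M p.edges.toFinset) u ≤ c u ∧
          degOn (symmDiffE M p.edges.toFinset) v ≤ c v := by
  constructor
  · rintro ⟨-, hmax⟩ ⟨u, v, p, hp⟩
    exact (hmax _ (IsProperAugmentingTrail.isCMatching_symmDiffE hM hp)).not_gt
      (IsProperAugmentingTrail.wsum_lt hp)
  · intro hno
    refine ⟨hM, fun N hN => not_lt.1 fun hlt => hno ?_⟩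
    exact hN.isCSwap_sdiff.exists_isProperAugmentingTrail hM (wsum_sdiff_lt_wsum_sdiff hlt)

/-- a `c`-matching is maximum-weight iff there is no proper `M`-augmenting trail. -/
theorem stmt1 [Fintype V] [DecidableEq V] (G : SimpleGraph V) (w : Sym2 V → ℝ)
    (hw : ∀ e, 0 ≤ w e) (c : V → ℕ) (M : Finset (Sym2 V)) (hM : IsCMatching G c M) :
    IsMaxCMatching G w c M ↔
      ¬ ∃ (u v : V) (p : G.Walk u v), p.IsTrail ∧
          Alternating M p.edges ∧ Augmenting w M p.edges ∧
          degOn (symmDiffE M p.edges.toFinset) u ≤ c u ∧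
          degOn (symmDiffE M p.edges.toFinset) v ≤ c v :=
  stmt1_general G w c M hM
end

section
/- Let M be a maximum-weight c-matching in a capacitated graph G, and let P be a proper M-augmenting walk that repeats some edge, with t the least index such that e_t = e_s for some s < t, and suppose P traverses e_s and e_t in the same direction. Writing P = (P_1, e_s, P_2, e_t, P_3), the closed trail (e_s, P_2, e_t) is M-alternating of even length and is not M-augmenting, and consequently (P_1, e_s, P_3) is a strictly shorter proper M-augmenting walk. -/
variable {V : Type*}

/-- The list of (undirected) edges underlying a list of darts. -/
def edgesOf {V : Type*} (l : List (V × V)) : List (Sym2 V) := l.map (fun d => s(d.1, d.2))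

/-- A list of darts forms a walk in `G`. -/
def IsWalkList {V : Type*} (G : SimpleGraph V) (l : List (V × V)) : Prop :=
  (∀ d ∈ l, G.Adj d.1 d.2) ∧ l.Chain' (fun d d' => d.2 = d'.1)

/-- Number of occurrences (with multiplicity) at `v` of edges of the walk whose
membership in `M` is `inM`. -/
def occAt {V : Type*} [DecidableEq V] (M : Finset (Sym2 V)) (l : List (V × V)) (v : V)
    (inM : Bool) : ℕ :=
  ((edgesOf l).filter (fun e => decide (e ∈ M) == inM)).countP (fun e => decide (v ∈ e))

/-- Properness of a walk at an endpoint `v`: `d_v^{W △ M} ≤ c_v`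
(multiplicities of repeated edges counted). -/
def ProperEnd {V : Type*} [DecidableEq V] (M : Finset (Sym2 V)) (c : V → ℕ)
    (l : List (V × V)) (v : V) : Prop :=
  (degOn M v : ℤ) + (occAt M l v false : ℤ) - (occAt M l v true : ℤ) ≤ (c v : ℤ)

/-- The inverse of a dart-list walk. -/
def invWalk {V : Type*} (l : List (V × V)) : List (V × V) := (l.map Prod.swap).reverse

/-!
Since `e_s = e_t`, cutting the closed walk `C = (P₂, e_t)` out of `P` leaves an alternating walk
with the same ends. The alternating sequence `(e_s, P₂, e_t)` starts and ends with the same edge,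
so `C` has even length; hence at every vertex `C` has as many matched as unmatched edge-ends,
the wrap-around included. As `C` repeats no edge, `M △ C` is again a `c`-matching, and
maximality of `M` gives `w(C \ M) ≤ w(C ∩ M)`: `C` is not augmenting. Removing `C` from `P`
therefore keeps it augmenting and leaves the degrees in `M △ P` unchanged, hence keeps it proper.
-/

theorem List.IsChain.cut_loop {α : Type*} {R : α → α → Prop} {l₁ l₂ l₃ : List α} {a : α}
    (h : (l₁ ++ [a] ++ l₂ ++ [a] ++ l₃).IsChain R) : (l₁ ++ [a] ++ l₃).IsChain R :=
  (h.infix ⟨[], l₂ ++ [a] ++ l₃, by simp⟩ : (l₁ ++ [a]).IsChain R).append_overlap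
    (h.infix ⟨l₁ ++ [a] ++ l₂, [], by simp⟩) (List.cons_ne_nil a [])

theorem List.getLast?_cut_loop {α : Type*} (l₁ l₂ l₃ : List α) (a : α) :
    (l₁ ++ [a] ++ l₂ ++ [a] ++ l₃).getLast? = (l₁ ++ [a] ++ l₃).getLast? := by
  simp only [List.getLast?_append, List.getLast?_singleton]
  cases l₃.getLast? <;> rfl

section Walks

variable {G : SimpleGraph V} {l l₁ l₂ l₃ : List (V × V)}

@[simp]
theorem edgesOf_append : edgesOf (l₁ ++ l₂) = edgesOf l₁ ++ edgesOf l₂ :=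
  List.map_append

@[simp]
theorem edgesOf_cons (d : V × V) : edgesOf (d :: l) = s(d.1, d.2) :: edgesOf l :=
  rfl

@[simp]
theorem length_edgesOf : (edgesOf l).length = l.length :=
  List.length_map _

@[simp]
theorem edgesOf_nil : edgesOf ([] : List (V × V)) = [] :=
  rfl

theorem IsWalkList.infix (h : IsWalkList G l) (hl : l₁ <:+: l) : IsWalkList G l₁ :=
  ⟨fun d hd => h.1 d (hl.subset hd), h.2.infix hl⟩

theorem IsWalkList.tail {d : V × V} (h : IsWalkList G (d :: l)) : IsWalkList G l :=
  h.infix (List.suffix_cons d l).isInfix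

theorem IsWalkList.cut_loop {a : V × V} (h : IsWalkList G (l₁ ++ [a] ++ l₂ ++ [a] ++ l₃)) :
    IsWalkList G (l₁ ++ [a] ++ l₃) :=
  ⟨fun d hd => h.1 d (by simp only [List.mem_append, List.mem_singleton] at hd ⊢; tauto),
    h.2.cut_loop⟩

theorem IsWalkList.closed_of_cons_append {a : V × V} (h : IsWalkList G (a :: (l ++ [a]))) :
    (l ++ [a]).head?.map Prod.fst = (l ++ [a]).getLast?.map Prod.snd := by
  obtain ⟨y, hy⟩ : ∃ y, (l ++ [a]).head? = some y := Option.isSome_iff_exists.mp (by simp)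
  simp [hy, (List.isChain_cons.mp h.2).1 y hy]

end Walks

section Alternating

variable [DecidableEq V] {M : Finset (Sym2 V)}

theorem Alternating.cut_loop {l₁ l₂ l₃ : List (Sym2 V)} {a : Sym2 V}
    (h : Alternating M (l₁ ++ [a] ++ l₂ ++ [a] ++ l₃)) : Alternating M (l₁ ++ [a] ++ l₃) :=
  List.IsChain.cut_loop h

theorem Alternating.getLast_mem_iff {x : Sym2 V} {l : List (Sym2 V)}
    (h : Alternating M (x :: l)) :
    ((x :: l).getLast (List.cons_ne_nil x l) ∈ M ↔ x ∈ M) ↔ Even l.length := by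
  induction l generalizing x with
  | nil => simp
  | cons y l ih =>
    obtain ⟨hxy, hy⟩ := List.isChain_cons_cons.mp h
    rw [List.getLast_cons_cons, List.length_cons, Nat.even_add_one, ← ih hy]
    tauto

theorem Alternating.even_length_of_cons_append {x : Sym2 V} {l : List (Sym2 V)}
    (h : Alternating M (x :: (l ++ [x]))) : Even (l ++ [x]).length := by
  simpa using h.getLast_mem_iff

end Alternating

section MatchedExcess

variable [DecidableEq V] {M : Finset (Sym2 V)} {G : SimpleGraph V} {l l₁ l₂ : List (V × V)}
  {v : V}

def matchedExcess (M : Finset (Sym2 V)) (l : List (V × V)) (v : V) : ℤ :=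
  occAt M l v true - occAt M l v false

def edgeSign (M : Finset (Sym2 V)) (d : V × V) : ℤ :=
  if s(d.1, d.2) ∈ M then 1 else -1

@[simp]
theorem matchedExcess_nil : matchedExcess M [] v = 0 := by
  simp [matchedExcess, occAt]

theorem matchedExcess_append :
    matchedExcess M (l₁ ++ l₂) v = matchedExcess M l₁ v + matchedExcess M l₂ v := by
  simp only [matchedExcess, occAt, edgesOf_append, List.filter_append, List.countP_append]
  push_cast
  ring

theorem matchedExcess_cons {d : V × V} (hd : d.1 ≠ d.2) :
    matchedExcess M (d :: l) v =
      edgeSign M d * ((if v = d.1 then 1 else 0) + (if v = d.2 then 1 else 0)) +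
        matchedExcess M l v := by
  simp only [matchedExcess, occAt, edgeSign, edgesOf_cons, List.filter_cons]
  by_cases hM : s(d.1, d.2) ∈ M <;> by_cases h1 : v = d.1 <;> by_cases h2 : v = d.2 <;>
    simp_all <;> omega

/-- Along an alternating walk the two edges at an interior visit have opposite signs and cancel,
so only the two ends contribute. -/
theorem IsWalkList.matchedExcess_eq_of_alternating {d : V × V} (hw : IsWalkList G (d :: l))
    (halt : Alternating M (edgesOf (d :: l))) :
    matchedExcess M (d :: l) v =
      edgeSign M d * ((if v = d.1 then 1 else 0) + (-1) ^ l.length *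
        (if v = ((d :: l).getLast (List.cons_ne_nil d l)).2 then 1 else 0)) := by
  induction l generalizing d with
  | nil =>
    rw [matchedExcess_cons (hw.1 d (by simp)).ne, matchedExcess_nil, List.getLast_singleton,
      List.length_nil, pow_zero, one_mul, add_zero]
  | cons y l ih =>
    obtain ⟨hdy, -⟩ := List.isChain_cons_cons.mp hw.2
    have hsign : edgeSign M y = -edgeSign M d := by
      have := (List.isChain_cons_cons.mp halt).1
      by_cases hd : s(d.1, d.2) ∈ M <;> simp_all [edgeSign]
    rw [matchedExcess_cons (hw.1 d (by simp)).ne, ih hw.tail halt.tail, hsign,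
      List.getLast_cons_cons, ← hdy, List.length_cons, pow_succ]
    ring

theorem IsWalkList.matchedExcess_eq_zero_of_closed (hw : IsWalkList G l)
    (halt : Alternating M (edgesOf l))
    (hclosed : l.head?.map Prod.fst = l.getLast?.map Prod.snd) (heven : Even l.length) :
    matchedExcess M l v = 0 := by
  cases l with
  | nil => exact matchedExcess_nil
  | cons d l =>
    have hlast : d.1 = ((d :: l).getLast (List.cons_ne_nil d l)).2 := by
      simpa [List.getLast?_eq_some_getLast] using hclosed
    have hodd : Odd l.length := by simpa [Nat.even_add_one] using heven
    rw [hw.matchedExcess_eq_of_alternating halt, ← hlast, hodd.neg_one_pow]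
    ring

end MatchedExcess

section SymmDiff

variable [DecidableEq V] {G : SimpleGraph V} {w : Sym2 V → ℝ} {c : V → ℕ}
  {M A B C : Finset (Sym2 V)}

theorem degOn_union_of_disjoint (h : Disjoint A B) (v : V) :
    degOn (A ∪ B) v = degOn A v + degOn B v := by
  rw [degOn, Finset.filter_union, Finset.card_union_of_disjoint (Finset.disjoint_filter_filter h)]
  rfl

theorem wsum_union_of_disjoint (h : Disjoint A B) : wsum w (A ∪ B) = wsum w A + wsum w B :=
  Finset.sum_union h

theorem degOn_symmDiffE (v : V) :
    degOn (symmDiffE M C) v + degOn (M ∩ C) v = degOn M v + degOn (C \ M) v := by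
  have hM := degOn_union_of_disjoint (Finset.disjoint_sdiff_inter M C) v
  rw [Finset.sdiff_union_inter] at hM
  rw [symmDiffE, degOn_union_of_disjoint disjoint_sdiff_sdiff, hM]
  ring

theorem wsum_symmDiffE :
    wsum w (symmDiffE M C) = wsum w M - wsum w (M ∩ C) + wsum w (C \ M) := by
  rw [symmDiffE, wsum_union_of_disjoint disjoint_sdiff_sdiff, ← Finset.sdiff_union_inter M C,
    wsum_union_of_disjoint (Finset.disjoint_sdiff_inter M C), Finset.sdiff_union_inter]
  ring

theorem IsCMatching.symmDiffE (hM : IsCMatching G c M) (hCG : ∀ e ∈ C, e ∈ G.edgeSet)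
    (hdeg : ∀ v, degOn (M ∩ C) v = degOn (C \ M) v) : IsCMatching G c (symmDiffE M C) := by
  refine ⟨fun e he => ?_, fun v => ?_⟩
  · rcases Finset.mem_union.mp he with h | h
    · exact hM.1 e (Finset.mem_sdiff.mp h).1
    · exact hCG e (Finset.mem_sdiff.mp h).1
  · have := degOn_symmDiffE (M := M) (C := C) v
    have := hM.2 v
    have := hdeg v
    omega

end SymmDiff

section Weights

variable [DecidableEq V] {w : Sym2 V → ℝ} {M : Finset (Sym2 V)} {L A B C : List (Sym2 V)}

@[simp]
theorem matchedWeight_append :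
    matchedWeight w M (A ++ B) = matchedWeight w M A + matchedWeight w M B := by
  simp [matchedWeight]

@[simp]
theorem unmatchedWeight_append :
    unmatchedWeight w M (A ++ B) = unmatchedWeight w M A + unmatchedWeight w M B := by
  simp [unmatchedWeight]

theorem matchedWeight_eq_wsum_s5 (h : L.Nodup) : matchedWeight w M L = wsum w (L.toFinset ∩ M) := by
  rw [matchedWeight, ← List.sum_toFinset w (h.filter _), List.toFinset_filter, wsum]
  simp [Finset.filter_mem_eq_inter]

theorem unmatchedWeight_eq_wsum_s5 (h : L.Nodup) :
    unmatchedWeight w M L = wsum w (L.toFinset \ M) := by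
  rw [unmatchedWeight, ← List.sum_toFinset w (h.filter _), List.toFinset_filter, wsum]
  simp [Finset.sdiff_eq_filter]

theorem Augmenting.of_append_append (hC : ¬Augmenting w M C)
    (h : Augmenting w M (A ++ C ++ B)) : Augmenting w M (A ++ B) := by
  simp only [Augmenting, not_lt, matchedWeight_append, unmatchedWeight_append] at *
  linarith

end Weights

section Occurrences

variable [DecidableEq V] {M : Finset (Sym2 V)} {c : V → ℕ} {l A B C : List (V × V)} {v : V}

theorem occAt_true_eq_degOn (h : (edgesOf l).Nodup) (v : V) :
    occAt M l v true = degOn ((edgesOf l).toFinset ∩ M) v := by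
  rw [occAt, List.countP_eq_length_filter, List.filter_filter,
    ← List.toFinset_card_of_nodup (h.filter _), List.toFinset_filter, degOn]
  congr 1
  ext e
  simp only [Finset.mem_filter, Finset.mem_inter, List.mem_toFinset, Bool.and_eq_true,
    beq_iff_eq, decide_eq_true_eq]
  tauto

theorem occAt_false_eq_degOn (h : (edgesOf l).Nodup) (v : V) :
    occAt M l v false = degOn ((edgesOf l).toFinset \ M) v := by
  rw [occAt, List.countP_eq_length_filter, List.filter_filter,
    ← List.toFinset_card_of_nodup (h.filter _), List.toFinset_filter, degOn]
  congr 1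
  ext e
  simp only [Finset.mem_filter, Finset.mem_sdiff, List.mem_toFinset, Bool.and_eq_true,
    beq_iff_eq, decide_eq_true_eq, decide_eq_false_iff_not]
  tauto

theorem properEnd_iff :
    ProperEnd M c l v ↔ (degOn M v : ℤ) - matchedExcess M l v ≤ c v := by
  rw [ProperEnd, matchedExcess]
  constructor <;> intro h <;> linarith

theorem ProperEnd.of_append_append (hC : matchedExcess M C v = 0)
    (h : ProperEnd M c (A ++ C ++ B) v) : ProperEnd M c (A ++ B) v := by
  have hexcess : matchedExcess M (A ++ C ++ B) v = matchedExcess M (A ++ B) v := by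
    simp only [matchedExcess_append, hC, add_zero]
  rw [properEnd_iff, ← hexcess]
  exact properEnd_iff.mp h

end Occurrences

theorem IsMaxCMatching.not_augmenting_of_closed [DecidableEq V] {G : SimpleGraph V}
    {w : Sym2 V → ℝ} {c : V → ℕ} {M : Finset (Sym2 V)} {l : List (V × V)}
    (hM : IsMaxCMatching G w c M) (hw : IsWalkList G l) (halt : Alternating M (edgesOf l))
    (hclosed : l.head?.map Prod.fst = l.getLast?.map Prod.snd) (heven : Even l.length)
    (hnodup : (edgesOf l).Nodup) : ¬Augmenting w M (edgesOf l) := by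
  set C := (edgesOf l).toFinset with hC
  have hCG : ∀ e ∈ C, e ∈ G.edgeSet := by
    intro e he
    obtain ⟨d, hd, rfl⟩ := List.mem_map.mp (List.mem_toFinset.mp he)
    exact hw.1 d hd
  have hdeg (v : V) : degOn (M ∩ C) v = degOn (C \ M) v := by
    have := hw.matchedExcess_eq_zero_of_closed halt hclosed heven (v := v)
    rw [matchedExcess, occAt_true_eq_degOn hnodup, occAt_false_eq_degOn hnodup,
      Finset.inter_comm, ← hC] at this
    omega
  have hle := hM.2 _ (hM.1.symmDiffE hCG hdeg)
  rw [wsum_symmDiffE] at hle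
  rw [Augmenting, matchedWeight_eq_wsum_s5 hnodup, unmatchedWeight_eq_wsum_s5 hnodup,
    Finset.inter_comm]
  linarith

theorem stmt5_general [DecidableEq V] (G : SimpleGraph V) (w : Sym2 V → ℝ)
    (c : V → ℕ) (M : Finset (Sym2 V))
    (hMmax : IsMaxCMatching G w c M)
    (P₁ P₂ P₃ : List (V × V)) (es et : V × V) {u v : V}
    (hwalk : IsWalkList G (P₁ ++ [es] ++ P₂ ++ [et] ++ P₃))
    (hu : (P₁ ++ [es] ++ P₂ ++ [et] ++ P₃).head?.map Prod.fst = some u)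
    (hv : (P₁ ++ [es] ++ P₂ ++ [et] ++ P₃).getLast?.map Prod.snd = some v)
    (halt : Alternating M (edgesOf (P₁ ++ [es] ++ P₂ ++ [et] ++ P₃)))
    (haug : Augmenting w M (edgesOf (P₁ ++ [es] ++ P₂ ++ [et] ++ P₃)))
    (hpu : ProperEnd M c (P₁ ++ [es] ++ P₂ ++ [et] ++ P₃) u)
    (hpv : ProperEnd M c (P₁ ++ [es] ++ P₂ ++ [et] ++ P₃) v)
    -- `e_t` is the first repetition of an edge, and it repeats `e_s` in the same direction
    (hfirst : (edgesOf (P₁ ++ [es] ++ P₂)).Nodup) (hrep : et = es) :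
    -- the closed part `(P₂, e_t)` is `M`-alternating, of even length, and not `M`-augmenting
    (Alternating M (edgesOf (P₂ ++ [et])) ∧ Even (P₂ ++ [et]).length ∧
      ¬ Augmenting w M (edgesOf (P₂ ++ [et]))) ∧
    -- `(P₁, e_s, P₃)` is a strictly shorter proper `M`-augmenting walk from `u` to `v`
    (IsWalkList G (P₁ ++ [es] ++ P₃) ∧
      (P₁ ++ [es] ++ P₃).head?.map Prod.fst = some u ∧
      (P₁ ++ [es] ++ P₃).getLast?.map Prod.snd = some v ∧
      Alternating M (edgesOf (P₁ ++ [es] ++ P₃)) ∧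
      Augmenting w M (edgesOf (P₁ ++ [es] ++ P₃)) ∧
      ProperEnd M c (P₁ ++ [es] ++ P₃) u ∧ ProperEnd M c (P₁ ++ [es] ++ P₃) v ∧
      (P₁ ++ [es] ++ P₃).length < (P₁ ++ [es] ++ P₂ ++ [et] ++ P₃).length) := by
  subst hrep
  have hsplit : P₁ ++ [et] ++ P₂ ++ [et] ++ P₃ = P₁ ++ [et] ++ (P₂ ++ [et]) ++ P₃ := by simp
  have hloop : IsWalkList G (et :: (P₂ ++ [et])) := hwalk.infix ⟨P₁, P₃, by simp⟩
  have hwalkC := hloop.tail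
  have hclosedC := hloop.closed_of_cons_append
  have haltC : Alternating M (edgesOf (P₂ ++ [et])) :=
    List.IsChain.infix halt ⟨edgesOf (P₁ ++ [et]), edgesOf P₃, by simp⟩
  have hevenC : Even (P₂ ++ [et]).length := by
    simpa using Alternating.even_length_of_cons_append (x := s(et.1, et.2)) (l := edgesOf P₂)
      (halt.infix ⟨edgesOf P₁, edgesOf P₃, by simp⟩)
  have hnodupC : (edgesOf (P₂ ++ [et])).Nodup := by
    rw [edgesOf_append]
    exact List.perm_append_comm.nodup_iff.mpr (hfirst.sublist (by simp))
  have hnotaugC := hMmax.not_augmenting_of_closed hwalkC haltC hclosedC hevenC hnodupC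
  have hexcessC (z : V) := hwalkC.matchedExcess_eq_zero_of_closed haltC hclosedC hevenC (v := z)
  rw [hsplit] at hpu hpv haug
  refine ⟨⟨haltC, hevenC, hnotaugC⟩, hwalk.cut_loop, by simpa using hu,
    by rwa [← List.getLast?_cut_loop _ P₂],
    ?_, ?_, hpu.of_append_append (hexcessC u), hpv.of_append_append (hexcessC v), by simp⟩
  · simpa using Alternating.cut_loop (by simpa using halt)
  · rw [edgesOf_append, edgesOf_append] at haug
    rw [edgesOf_append]
    exact haug.of_append_append hnotaugC

/-- if a proper `M`-augmenting walk `P = (P₁, e_s, P₂, e_t, P₃)` (with `M`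
maximum-weight) repeats the edge `e_s = e_t` in the same direction at the first repetition,
then the closed part is alternating, of even length and not `M`-augmenting, and
`(P₁, e_s, P₃)` is a strictly shorter proper `M`-augmenting walk. -/
theorem stmt5 [Fintype V] [DecidableEq V] (G : SimpleGraph V) (w : Sym2 V → ℝ)
    (hw : ∀ e, 0 ≤ w e) (c : V → ℕ) (M : Finset (Sym2 V))
    (hMmax : IsMaxCMatching G w c M)
    (P₁ P₂ P₃ : List (V × V)) (es et : V × V) {u v : V}
    (hwalk : IsWalkList G (P₁ ++ [es] ++ P₂ ++ [et] ++ P₃))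
    (hu : (P₁ ++ [es] ++ P₂ ++ [et] ++ P₃).head?.map Prod.fst = some u)
    (hv : (P₁ ++ [es] ++ P₂ ++ [et] ++ P₃).getLast?.map Prod.snd = some v)
    (halt : Alternating M (edgesOf (P₁ ++ [es] ++ P₂ ++ [et] ++ P₃)))
    (haug : Augmenting w M (edgesOf (P₁ ++ [es] ++ P₂ ++ [et] ++ P₃)))
    (hpu : ProperEnd M c (P₁ ++ [es] ++ P₂ ++ [et] ++ P₃) u)
    (hpv : ProperEnd M c (P₁ ++ [es] ++ P₂ ++ [et] ++ P₃) v)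
    -- `e_t` is the first repetition of an edge, and it repeats `e_s` in the same direction
    (hfirst : (edgesOf (P₁ ++ [es] ++ P₂)).Nodup) (hrep : et = es) :
    -- the closed part `(P₂, e_t)` is `M`-alternating, of even length, and not `M`-augmenting
    (Alternating M (edgesOf (P₂ ++ [et])) ∧ Even (P₂ ++ [et]).length ∧
      ¬ Augmenting w M (edgesOf (P₂ ++ [et]))) ∧
    -- `(P₁, e_s, P₃)` is a strictly shorter proper `M`-augmenting walk from `u` to `v`
    (IsWalkList G (P₁ ++ [es] ++ P₃) ∧
      (P₁ ++ [es] ++ P₃).head?.map Prod.fst = some u ∧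
      (P₁ ++ [es] ++ P₃).getLast?.map Prod.snd = some v ∧
      Alternating M (edgesOf (P₁ ++ [es] ++ P₃)) ∧
      Augmenting w M (edgesOf (P₁ ++ [es] ++ P₃)) ∧
      ProperEnd M c (P₁ ++ [es] ++ P₃) u ∧ ProperEnd M c (P₁ ++ [es] ++ P₃) v ∧
      (P₁ ++ [es] ++ P₃).length < (P₁ ++ [es] ++ P₂ ++ [et] ++ P₃).length) :=
  stmt5_general G w c M hMmax P₁ P₂ P₃ es et hwalk hu hv halt haug hpu hpv hfirst hrep
end

section
/- If every vertex of a feasible M-augmenting walk W in a capacitated graph G is covered by the c-matching M, then no set S of M-avoiding vertices (vertices not covered by M) can be removed to destroy W; consequently, if such a walk exists, the M-vertex-stabilizer instance [(G,w,c), M] is infeasible: no vertex-stabilizer preserving M exists, and ν_f^c(G \ S) > w(M) for every S ⊆ V avoiding M. -/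
variable {V : Type*}

/-- The graph obtained from `G` by deleting the vertices of `S` (keeping the vertex type). -/
def delVerts [DecidableEq V] (G : SimpleGraph V) (S : Finset V) : SimpleGraph V :=
  SimpleGraph.fromRel (fun u v => G.Adj u v ∧ u ∉ S ∧ v ∉ S)

/-!
The ε-augmentation `x^{M/W}(ε)` has value `w(M) + ε (w(W \ M) - w(W ∩ M)) > w(M)`, and its
support consists of edges of `M` and of `W`, whose endpoints are all `M`-covered. Hence it is
still a fractional `c`-matching after deleting any set `S` of `M`-exposed vertices, so
`ν_f^c(G \ S) > w(M)`; if `M` were maximum in `G \ S`, then `ν^c(G \ S) = w(M) < ν_f^c(G \ S)`.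
-/

open Finset

theorem List.sum_map_filter_eq_sum_count {α β : Type*} [Fintype α] [DecidableEq α]
    [AddCommMonoid β] (l : List α) (p : α → Bool) (f : α → β) :
    ((l.filter p).map f).sum = ∑ a, if p a then l.count a • f a else 0 := by
  rw [sum_list_map_count, sum_subset (subset_univ _)]
  · refine sum_congr rfl fun a _ => ?_
    split_ifs with hp
    · rw [List.count_filter hp]
    · rw [List.count_eq_zero_of_not_mem (by simp [hp]), zero_smul]
  · intro a _ ha
    rw [List.count_eq_zero_of_not_mem (by simpa using ha), zero_smul]

theorem pos_degOn_of_mem [DecidableEq V] {M : Finset (Sym2 V)} {e : Sym2 V} (he : e ∈ M) {v : V}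
    (hv : v ∈ e) : 0 < degOn M v :=
  card_pos.mpr ⟨e, mem_filter.mpr ⟨he, hv⟩⟩

theorem pos_degOn_of_epsAug_ne_zero [DecidableEq V] {G : SimpleGraph V} {a b : V}
    {M : Finset (Sym2 V)} {p : G.Walk a b} (hcov : ∀ v ∈ p.support, 0 < degOn M v) {ε : ℝ}
    {e : Sym2 V} (he : epsAug M p ε e ≠ 0) {v : V} (hv : v ∈ e) : 0 < degOn M v := by
  by_cases heM : e ∈ M
  · exact pos_degOn_of_mem heM hv
  · have hep : e ∈ p.edges := by
      by_contra hep
      simp [epsAug, heM, List.count_eq_zero_of_not_mem hep] at he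
    exact hcov v (p.mem_support_of_mem_edges hep hv)

theorem mem_edgeSet_delVerts [DecidableEq V] {G : SimpleGraph V} {S : Finset V} {e : Sym2 V}
    (he : e ∈ G.edgeSet) (hS : ∀ v ∈ e, v ∉ S) : e ∈ (delVerts G S).edgeSet := by
  induction e with
  | _ u v =>
    rw [SimpleGraph.mem_edgeSet] at he ⊢
    rw [delVerts, SimpleGraph.fromRel_adj]
    exact ⟨he.ne, Or.inl ⟨he, hS u (by simp), hS v (by simp)⟩⟩

section

variable [Fintype V] [DecidableEq V]

theorem lpVal_epsAug {G : SimpleGraph V} {a b : V} (w : Sym2 V → ℝ) (M : Finset (Sym2 V))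
    (p : G.Walk a b) (ε : ℝ) :
    lpVal w (epsAug M p ε)
      = wsum w M + ε * (unmatchedWeight w M p.edges - matchedWeight w M p.edges) := by
  have hM : wsum w M = ∑ e, if e ∈ M then w e else 0 := by
    rw [sum_ite_mem, univ_inter, wsum]
  rw [matchedWeight, unmatchedWeight, List.sum_map_filter_eq_sum_count,
    List.sum_map_filter_eq_sum_count, hM, lpVal, ← sum_sub_distrib, mul_sum, ← sum_add_distrib]
  refine sum_congr rfl fun e _ => ?_
  simp only [epsAug, decide_eq_true_eq, decide_not, Bool.not_eq_eq_eq_not, Bool.not_true,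
    decide_eq_false_iff_not, nsmul_eq_mul]
  split_ifs <;> ring

theorem wsum_lt_lpVal_epsAug {G : SimpleGraph V} {a b : V} {w : Sym2 V → ℝ}
    {M : Finset (Sym2 V)} {p : G.Walk a b} (haug : Augmenting w M p.edges) {ε : ℝ}
    (hε : 0 < ε) : wsum w M < lpVal w (epsAug M p ε) := by
  rw [lpVal_epsAug]
  have : 0 < unmatchedWeight w M p.edges - matchedWeight w M p.edges := sub_pos.mpr haug
  linarith [mul_pos hε this]

theorem IsFracCMatching.delVerts {G : SimpleGraph V} {c : V → ℕ} {x : Sym2 V → ℝ}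
    (hx : IsFracCMatching G c x) {S : Finset V} (hS : ∀ e, x e ≠ 0 → ∀ v ∈ e, v ∉ S) :
    IsFracCMatching (delVerts G S) c x := by
  refine ⟨hx.1, fun e he => ?_, hx.2.2⟩
  by_contra hxe
  have heG : e ∈ G.edgeSet := by
    by_contra heG
    exact hxe (hx.2.1 e heG)
  exact he (mem_edgeSet_delVerts heG (hS e hxe))

theorem lpVal_le_nuF {G : SimpleGraph V} {c : V → ℕ} {x : Sym2 V → ℝ}
    (hx : IsFracCMatching G c x) (w : Sym2 V → ℝ) : lpVal w x ≤ nuF G w c := by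
  refine le_csSup ⟨∑ e, |w e|, ?_⟩ ⟨x, hx, rfl⟩
  rintro r ⟨y, hy, rfl⟩
  refine sum_le_sum fun e _ => (le_abs_self _).trans ?_
  rw [abs_mul, abs_of_nonneg (hy.1 e).1]
  exact mul_le_of_le_one_right (abs_nonneg _) (hy.1 e).2

theorem IsMaxCMatching.nuC_le {G : SimpleGraph V} {w : Sym2 V → ℝ} {c : V → ℕ}
    {M : Finset (Sym2 V)} (hM : IsMaxCMatching G w c M) : nuC G w c ≤ wsum w M := by
  refine csSup_le ⟨wsum w M, M, hM.1, rfl⟩ ?_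
  rintro r ⟨N, hN, rfl⟩
  exact hM.2 N hN

end

theorem stmt17_general [Fintype V] [DecidableEq V] (G : SimpleGraph V) (w : Sym2 V → ℝ)
    (c : V → ℕ) (M : Finset (Sym2 V))
    {a b : V} (p : G.Walk a b)
    (haug : Augmenting w M p.edges)
    (hfeas : ∃ ε > (0 : ℝ), IsFracCMatching G c (epsAug M p ε))
    (hcov : ∀ v ∈ p.support, 0 < degOn M v) :
    (∀ S : Finset V, (∀ v ∈ S, degOn M v = 0) → wsum w M < nuF (delVerts G S) w c) ∧
      ¬ ∃ S : Finset V, (∀ v ∈ S, degOn M v = 0) ∧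
          IsMaxCMatching (delVerts G S) w c M ∧ Stable (delVerts G S) w c := by
  obtain ⟨ε, hε, hx⟩ := hfeas
  have hlt : ∀ S : Finset V, (∀ v ∈ S, degOn M v = 0) →
      wsum w M < nuF (delVerts G S) w c := by
    intro S hS
    have hsupp : ∀ e, epsAug M p ε e ≠ 0 → ∀ v ∈ e, v ∉ S := fun e he v hv hvS =>
      (pos_degOn_of_epsAug_ne_zero hcov he hv).ne' (hS v hvS)
    exact (wsum_lt_lpVal_epsAug haug hε).trans_le (lpVal_le_nuF (hx.delVerts hsupp) w)
  refine ⟨hlt, ?_⟩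
  rintro ⟨S, hS, hmax, hstab⟩
  have := hlt S hS
  linarith [hmax.nuC_le, hstab.symm.le]

/-- if every vertex of a feasible `M`-augmenting walk `W` is `M`-covered, then
removing any set `S` of `M`-exposed vertices leaves `ν_f^c(G \ S) > w(M)`; consequently the
`M`-vertex-stabilizer instance `[(G, w, c), M]` is infeasible: there is no `S` of
`M`-exposed vertices such that `M` is maximum-weight in `G \ S` and `G \ S` is stable. -/
theorem stmt17 [Fintype V] [DecidableEq V] (G : SimpleGraph V) (w : Sym2 V → ℝ)
    (hw : ∀ e, 0 ≤ w e) (c : V → ℕ) (M : Finset (Sym2 V)) (hM : IsCMatching G c M)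
    {a b : V} (p : G.Walk a b)
    (halt : Alternating M p.edges) (haug : Augmenting w M p.edges)
    (hfeas : ∃ ε > (0 : ℝ), IsFracCMatching G c (epsAug M p ε))
    (hcov : ∀ v ∈ p.support, 0 < degOn M v) :
    (∀ S : Finset V, (∀ v ∈ S, degOn M v = 0) → wsum w M < nuF (delVerts G S) w c) ∧
      ¬ ∃ S : Finset V, (∀ v ∈ S, degOn M v = 0) ∧
          IsMaxCMatching (delVerts G S) w c M ∧ Stable (delVerts G S) w c :=
  stmt17_general G w c M p haug hfeas hcov
end
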